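/- Let X be a complete decomposition space. For any words v, v' over {0,1,a}, the subset X_{v0v'} equals the image of the degeneracy map s_{|v|} : X_{vv'} → X_{v1v'}. In particular, for 1 ≤ k ≤ n, the k-th principal edge of an n-simplex σ is degenerate if and only if σ = s_{k−1}(d_k(σ)). -/

import Mathlib

open CategoryTheory CategoryTheory.Limits Opposite

local notation "⦋" n "⦌" => SimplexCategory.mk n

local notation:1000 X " _⦋" n "⦌" => CategoryTheory.Functor.obj X (Opposite.op (SimplexCategory.mk n))

/-- A map in the simplex category is *generic* if it preserves the endpoints. -/
def IsGeneric {a b : SimplexCategory} (g : a ⟶ b) : Prop :=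
  g.toOrderHom 0 = 0 ∧ g.toOrderHom (Fin.last a.len) = Fin.last b.len

/-- A map in the simplex category is *free* if it is distance preserving. -/
def IsFree {a b : SimplexCategory} (f : a ⟶ b) : Prop :=
  ∀ i : Fin (a.len + 1), (f.toOrderHom i : ℕ) = (f.toOrderHom 0 : ℕ) + (i : ℕ)

/-- A decomposition space is a simplicial set carrying every pushout in `Δ` of a
generic map `g` along a free map `f` to a pullback of sets. -/
def IsDecomposition (X : SSet) : Prop :=
  ∀ ⦃a b c d : SimplexCategory⦄ (g : a ⟶ b) (f : a ⟶ c) (h : b ⟶ d) (k : c ⟶ d),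
    IsGeneric g → IsFree f → IsPushout g f h k →
    IsPullback (X.map h.op) (X.map k.op) (X.map g.op) (X.map f.op)

/-- A simplicial set is *complete* if all degeneracy maps are injective. -/
def Complete (X : SSet) : Prop :=
  ∀ (n : ℕ) (i : Fin (n + 1)), Function.Injective (X.σ i : X _⦋n⦌ ⟶ X _⦋n + 1⦌)

/-- The free map `[1] → [n]` sending `0, 1` to `i, i+1`; it induces the map
taking the `i`-th principal edge (`0`-indexed) of an `n`-simplex. -/
def principalEdge (n : ℕ) (i : Fin n) : (⦋1⦌ : SimplexCategory) ⟶ ⦋n⦌ :=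
  SimplexCategory.mkHom
    { toFun := fun j => ⟨i.1 + j.1, by have := i.2; have := j.2; omega⟩
      monotone' := fun a b h => by
        simp only [Fin.mk_le_mk]
        exact Nat.add_le_add_left h i.1 }

/-- The unique generic map `[1] → [n]` (`0 ↦ 0`, `1 ↦ n`); it induces the map
taking the long edge of an `n`-simplex. -/
def longEdgeMap (n : ℕ) : (⦋1⦌ : SimplexCategory) ⟶ ⦋n⦌ :=
  SimplexCategory.mkHom
    { toFun := fun j => ⟨j.1 * n, by
        have h := j.2
        have : j.1 * n ≤ 1 * n := Nat.mul_le_mul_right n (by omega)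
        omega⟩
      monotone' := fun a b h => by
        simp only [Fin.mk_le_mk]
        exact Nat.mul_le_mul_right n h }

/-- The alphabet `{0, 1, a}`: `z` prescribes a degenerate principal edge, `o` an
unrestricted one, `a` a nondegenerate one. -/
inductive Letter where
  | z : Letter
  | o : Letter
  | a : Letter
  deriving DecidableEq

/-- The subset of `X₁` prescribed by a letter. -/
def edgeSet (X : SSet) : Letter → Set (X _⦋1⦌)
  | .z => Set.range (X.σ (0 : Fin 1))
  | .o => Set.univ
  | .a => (Set.range (X.σ (0 : Fin 1)))ᶜ

/-- `X_w`, the set of `n`-simplices whose principal edges have the types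
prescribed by the word `w`. -/
def wordSet (X : SSet) {n : ℕ} (w : Fin n → Letter) : Set (X _⦋n⦌) :=
  {σ | ∀ i : Fin n, X.map (principalEdge n i).op σ ∈ edgeSet X (w i)}

/-- A simplex is *effective* if all its principal edges are nondegenerate. -/
def Effective (X : SSet) {n : ℕ} (σ : X _⦋n⦌) : Prop :=
  ∀ i : Fin n, X.map (principalEdge n i).op σ ∉ Set.range (X.σ (0 : Fin 1))

/-- The constant word `aa⋯a`. -/
def allA (n : ℕ) : Fin n → Letter := fun _ => Letter.a

/-- Concatenation of words. -/
def concatW {m n : ℕ} (v : Fin m → Letter) (v' : Fin n → Letter) : Fin (m + n) → Letter :=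
  fun i => if h : i.1 < m then v ⟨i.1, h⟩ else v' ⟨i.1 - m, by have := i.2; omega⟩

/-- The word `v ℓ v'` obtained by splicing a letter `ℓ` between the words `v` and `v'`. -/
def splice {m n : ℕ} (v : Fin m → Letter) (l : Letter) (v' : Fin n → Letter) :
    Fin (m + n + 1) → Letter :=
  fun i => if h : i.1 < m then v ⟨i.1, h⟩
    else if h2 : i.1 = m then l
    else v' ⟨i.1 - (m + 1), by have := i.2; omega⟩

/-- A simplex (of positive dimension) is degenerate if it is in the image of some
degeneracy map. -/
def Degen (X : SSet) {n : ℕ} (σ : X _⦋n + 1⦌) : Prop :=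
  ∃ i : Fin (n + 1), σ ∈ Set.range (X.σ i)

/-- A simplicial map is *cULF* if its naturality squares on all generic maps are
pullbacks. -/
def IsCULF {Y X : SSet} (f : Y ⟶ X) : Prop :=
  ∀ ⦃a b : SimplexCategory⦄ (g : a ⟶ b), IsGeneric g →
    IsPullback (f.app (op b)) (Y.map g.op) (X.map g.op) (f.app (op a))

/-- A simplicial map is *conservative* if its naturality squares on all degeneracy
maps are pullbacks. -/
def Conservative {Y X : SSet} (f : Y ⟶ X) : Prop :=
  ∀ (n : ℕ) (i : Fin (n + 1)),
    IsPullback (f.app (op (SimplexCategory.mk n))) (Y.σ i) (X.σ i)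
      (f.app (op (SimplexCategory.mk (n + 1))))

/-- A simplicial set is *stiff* if it carries every pushout in `Δ` of a codegeneracy
map along a free map to a pullback of sets. -/
def Stiff (X : SSet) : Prop :=
  ∀ (k : ℕ) (i : Fin (k + 1)) ⦃c d : SimplexCategory⦄
    (f : SimplexCategory.mk (k + 1) ⟶ c) (h : SimplexCategory.mk k ⟶ d) (j : c ⟶ d),
    IsFree f → IsPushout (SimplexCategory.σ i) f h j →
    IsPullback (X.map h.op) (X.map j.op) (X.map (SimplexCategory.σ i).op) (X.map f.op)

/-- The map `[0] → [n]` picking out the vertex `i`. -/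
def vertexMap (n : ℕ) (i : Fin (n + 1)) : (⦋0⦌ : SimplexCategory) ⟶ ⦋n⦌ :=
  SimplexCategory.mkHom ⟨fun _ => i, fun _ _ _ => le_refl _⟩

/-- The unique map `[n] → [0]`; it induces the iterated degeneracy `X₀ → Xₙ`. -/
def toZero (n : ℕ) : (⦋n⦌ : SimplexCategory) ⟶ ⦋0⦌ :=
  SimplexCategory.mkHom ⟨fun _ => 0, fun _ _ _ => le_refl _⟩

/-- The generic map `[2] → [m+n]` sending `0,1,2` to `0,m,m+n`. -/
def midMap (m n : ℕ) : (⦋2⦌ : SimplexCategory) ⟶ ⦋m + n⦌ :=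
  SimplexCategory.mkHom
    { toFun := fun j => ⟨if j.1 = 0 then 0 else if j.1 = 1 then m else m + n, by
        split
        · omega
        · split <;> omega⟩
      monotone' := by
        intro a b hab
        have h : a.1 ≤ b.1 := hab
        have ha := a.2
        have hb := b.2
        simp only [Fin.mk_le_mk]
        split <;> split <;> (try split) <;> (try split) <;> omega }

/-- The free map `[m] → [m+n]` onto the initial segment. -/
def freeInitial (m n : ℕ) : (⦋m⦌ : SimplexCategory) ⟶ ⦋m + n⦌ :=
  SimplexCategory.mkHom ⟨fun i => ⟨i.1, by have := i.2; omega⟩, fun a b h => h⟩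

/-- The free map `[n] → [m+n]` onto the final segment. -/
def freeFinal (m n : ℕ) : (⦋n⦌ : SimplexCategory) ⟶ ⦋m + n⦌ :=
  SimplexCategory.mkHom ⟨fun i => ⟨m + i.1, by have := i.2; omega⟩,
    fun a b h => by
      simp only [Fin.mk_le_mk]
      exact Nat.add_le_add_left h m⟩

/-- The word `1aa⋯a` (`n` letters `a`). -/
def oneA (n : ℕ) : Fin (n + 1) → Letter := fun i => if i.1 = 0 then Letter.o else Letter.a

/-- The word `0aa⋯a` (`n` letters `a`). -/
def zeroA (n : ℕ) : Fin (n + 1) → Letter := fun i => if i.1 = 0 then Letter.z else Letter.a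

/-- The word `aa⋯a1` (`n` letters `a`). -/
def aOne (n : ℕ) : Fin (n + 1) → Letter := fun i => if i.1 = n then Letter.o else Letter.a

/-- The word `aa⋯a0` (`n` letters `a`). -/
def aZero (n : ℕ) : Fin (n + 1) → Letter := fun i => if i.1 = n then Letter.z else Letter.a

/-- The number of letters `0` in a word. -/
def zcount {n : ℕ} (w : Fin n → Letter) : ℕ :=
  (Finset.univ.filter fun i => w i = Letter.z).card

/-- The surjection `[n] → [n - zcount w]` collapsing, for each position `j` with
`w j = 0`, the vertex `j+1` onto the vertex `j`; the induced map
`X_{n - zcount w} → X_n` is the iterated degeneracy `s_{j_k} ⋯ s_{j_1}` where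
`j_1 < ⋯ < j_k` are the positions of the letters `0` of `w`. -/
def collapseMap {n : ℕ} (w : Fin n → Letter) :
    (⦋n⦌ : SimplexCategory) ⟶ ⦋n - zcount w⦌ :=
  SimplexCategory.mkHom
    { toFun := fun t =>
        ⟨(Finset.univ.filter fun i : Fin n => i.1 < t.1 ∧ ¬ (w i = Letter.z)).card, by
          have h2 := Finset.card_filter_add_card_filter_not
            (s := (Finset.univ : Finset (Fin n))) (p := fun i => w i = Letter.z)
          have h1 : (Finset.univ.filter fun i : Fin n => i.1 < t.1 ∧ ¬ (w i = Letter.z)).card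
              ≤ (Finset.univ.filter fun i : Fin n => ¬ (w i = Letter.z)).card :=
            Finset.card_le_card (fun x hx => by
              simp only [Finset.mem_filter] at hx ⊢
              exact ⟨hx.1, hx.2.2⟩)
          have h3 : zcount w = (Finset.univ.filter fun i : Fin n => w i = Letter.z).card := rfl
          simp only [Finset.card_univ, Fintype.card_fin] at h2
          omega⟩
      monotone' := by
        intro a b hab
        have h : a.1 ≤ b.1 := hab
        simp only [Fin.mk_le_mk]
        exact Finset.card_le_card (fun x hx => by
          simp only [Finset.mem_filter] at hx ⊢
          exact ⟨hx.1, lt_of_lt_of_le hx.2.1 h, hx.2.2⟩) }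

/-- An edge has finite length if there is a bound on the dimensions of the effective
simplices having it as long edge. -/
def FiniteLength (X : SSet) (a : X _⦋1⦌) : Prop :=
  ∃ N : ℕ, ∀ (n : ℕ) (σ : X _⦋n⦌), Effective X σ →
    X.map (longEdgeMap n).op σ = a → n ≤ N

/-- A *tight* decomposition space: a complete decomposition space in which every edge
has finite length. -/
def Tight (X : SSet) : Prop :=
  IsDecomposition X ∧ Function.Injective (X.σ (0 : Fin 1) : X _⦋0⦌ ⟶ X _⦋1⦌) ∧
    ∀ a : X _⦋1⦌, FiniteLength X a

/-- The length of an edge: the supremum of the dimensions of effective simplices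
having it as long edge. -/
noncomputable def edgeLength (X : SSet) (a : X _⦋1⦌) : ℕ :=
  sSup {n : ℕ | ∃ σ : X _⦋n⦌, Effective X σ ∧ X.map (longEdgeMap n).op σ = a}

/-- A complete simplicial set is *split* if all face maps preserve nondegenerate
simplices. -/
def Split (X : SSet) : Prop :=
  Complete X ∧ ∀ (n : ℕ) (i : Fin (n + 3)) (σ : X _⦋n + 2⦌),
    ¬ Degen X σ → ¬ Degen X (X.δ i σ)

/-- The counit: the indicator function of the degenerate edges. -/
noncomputable def epsFun (X : SSet) : X _⦋1⦌ → ℚ := fun f =>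
  haveI := Classical.propDecidable (f ∈ Set.range (X.σ (0 : Fin 1)))
  if f ∈ Set.range (X.σ (0 : Fin 1)) then 1 else 0

/-- Convolution product on `ℚ`-valued functions on `X₁`. -/
noncomputable def convFun (X : SSet) (φ ψ : X _⦋1⦌ → ℚ) : X _⦋1⦌ → ℚ :=
  fun f => ∑ᶠ σ ∈ (fun τ => X.δ (1 : Fin 3) τ) ⁻¹' {f},
    φ (X.δ (2 : Fin 3) σ) * ψ (X.δ (0 : Fin 3) σ)

/-- The Möbius function `Φ_even - Φ_odd`. -/
noncomputable def muFun (X : SSet) : X _⦋1⦌ → ℚ :=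
  fun f => ∑ᶠ n : ℕ, (-1 : ℚ) ^ n *
    (Nat.card {σ : X.obj (op (SimplexCategory.mk n)) // Effective X σ ∧ X.map (longEdgeMap n).op σ = f} : ℚ)

/-- The category `Δ_inj`: objects those of the simplex category, morphisms the
injective monotone maps. -/
structure DeltaInj : Type where
  /-- the underlying object of the simplex category -/
  obj : SimplexCategory

instance : Category DeltaInj where
  Hom a b := {f : a.obj ⟶ b.obj // Function.Injective f.toOrderHom}
  id a := ⟨𝟙 a.obj, by
    rw [SimplexCategory.id_toOrderHom]
    exact fun x y h => h⟩
  comp f g := ⟨f.1 ≫ g.1, by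
    rw [SimplexCategory.comp_toOrderHom]
    exact fun x y h => f.2 (g.2 h)⟩
  id_comp f := by apply Subtype.ext; simp
  comp_id f := by apply Subtype.ext; simp
  assoc f g h := by apply Subtype.ext; simp

/-- The inclusion functor `Δ_inj ⊆ Δ`. -/
def DeltaInj.incl : DeltaInj ⥤ SimplexCategory where
  obj a := a.obj
  map f := f.1

/-- A *semi-decomposition space*: a semi-simplicial set carrying every pushout in
`Δ_inj` of a generic (inner) face map along a free (outer) face map to a pullback. -/
def IsSemiDecomposition (Z : DeltaInjᵒᵖ ⥤ Type) : Prop :=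
  ∀ ⦃a b c d : DeltaInj⦄ (g : a ⟶ b) (f : a ⟶ c) (h : b ⟶ d) (k : c ⟶ d),
    IsGeneric g.1 → IsFree f.1 → IsPushout g f h k →
    IsPullback (Z.map h.op) (Z.map k.op) (Z.map g.op) (Z.map f.op)

/-- A map of semi-simplicial sets is *ULF* if its naturality squares on all generic
face maps are pullbacks. -/
def IsULF {Z W : DeltaInjᵒᵖ ⥤ Type} (φ : Z ⟶ W) : Prop :=
  ∀ ⦃a b : DeltaInj⦄ (g : a ⟶ b), IsGeneric g.1 →
    IsPullback (φ.app (op b)) (Z.map g.op) (W.map g.op) (φ.app (op a))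

lemma conservative_id (X : SSet) : Conservative (𝟙 X) := by
  intro n i
  exact IsPullback.of_horiz_isIso ⟨by simp⟩

lemma conservative_comp {X Y Z : SSet} {f : X ⟶ Y} {g : Y ⟶ Z}
    (hf : Conservative f) (hg : Conservative g) : Conservative (f ≫ g) := by
  intro n i
  simpa using IsPullback.paste_horiz (hf n i) (hg n i)

lemma isCULF_id (X : SSet) : IsCULF (𝟙 X) := by
  intro a b gm hgm
  exact IsPullback.of_horiz_isIso ⟨by simp⟩

lemma isCULF_comp {X Y Z : SSet} {f : X ⟶ Y} {g : Y ⟶ Z}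
    (hf : IsCULF f) (hg : IsCULF g) : IsCULF (f ≫ g) := by
  intro a b gm hgm
  simpa using IsPullback.paste_horiz (hf gm hgm) (hg gm hgm)

lemma isULF_id (Z : DeltaInjᵒᵖ ⥤ Type) : IsULF (𝟙 Z) := by
  intro a b gm hgm
  exact IsPullback.of_horiz_isIso ⟨by simp⟩

lemma isULF_comp {X Y Z : DeltaInjᵒᵖ ⥤ Type} {f : X ⟶ Y} {g : Y ⟶ Z}
    (hf : IsULF f) (hg : IsULF g) : IsULF (f ≫ g) := by
  intro a b gm hgm
  simpa using IsPullback.paste_horiz (hf gm hgm) (hg gm hgm)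

/-- The category of split simplicial sets and conservative maps. -/
structure SplitSSet : Type 1 where
  /-- the underlying simplicial set -/
  X : SSet.{0}
  split : Split X

instance : Category SplitSSet where
  Hom A B := {f : A.X ⟶ B.X // Conservative f}
  id A := ⟨𝟙 A.X, conservative_id A.X⟩
  comp f g := ⟨f.1 ≫ g.1, conservative_comp f.2 g.2⟩
  id_comp f := by apply Subtype.ext; simp
  comp_id f := by apply Subtype.ext; simp
  assoc f g h := by apply Subtype.ext; simp

/-- The forgetful functor from split simplicial sets to simplicial sets. -/
def SplitSSet.forget : SplitSSet ⥤ SSet where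
  obj A := A.X
  map f := f.1

/-- The category of split decomposition spaces and cULF maps. -/
structure SplitDecomp : Type 1 where
  /-- the underlying simplicial set -/
  X : SSet.{0}
  split : Split X
  decomp : IsDecomposition X

instance : Category SplitDecomp where
  Hom A B := {f : A.X ⟶ B.X // IsCULF f}
  id A := ⟨𝟙 A.X, isCULF_id A.X⟩
  comp f g := ⟨f.1 ≫ g.1, isCULF_comp f.2 g.2⟩
  id_comp f := by apply Subtype.ext; simp
  comp_id f := by apply Subtype.ext; simp
  assoc f g h := by apply Subtype.ext; simp

/-- The forgetful functor from split decomposition spaces to simplicial sets. -/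
def SplitDecomp.forget : SplitDecomp ⥤ SSet where
  obj A := A.X
  map f := f.1

/-- The category of semi-decomposition spaces and ULF maps. -/
structure SemiDecomp : Type 1 where
  /-- the underlying semi-simplicial set -/
  Z : DeltaInjᵒᵖ ⥤ Type
  semidecomp : IsSemiDecomposition Z

instance : Category SemiDecomp where
  Hom A B := {φ : A.Z ⟶ B.Z // IsULF φ}
  id A := ⟨𝟙 A.Z, isULF_id A.Z⟩
  comp f g := ⟨f.1 ≫ g.1, isULF_comp f.2 g.2⟩
  id_comp f := by apply Subtype.ext; simp
  comp_id f := by apply Subtype.ext; simp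
  assoc f g h := by apply Subtype.ext; simp

/-- The forgetful functor from semi-decomposition spaces to semi-simplicial sets. -/
def SemiDecomp.forget : SemiDecomp ⥤ (DeltaInjᵒᵖ ⥤ Type) where
  obj A := A.Z
  map f := f.1

/-
In `Δ`, the square formed by `σ₀ : [1] → [0]`, the `i`-th principal edge `[1] → [n+1]`, the vertex
`i : [0] → [n]` and `σᵢ : [n+1] → [n]` is a pushout of a generic map along a free one. A
decomposition space turns it into a pullback `Xₙ ≅ X₀ ×_{X₁} X_{n+1}`: an `(n+1)`-simplex whose
`i`-th principal edge is degenerate is `sᵢ τ` for some `τ`, and then `τ = d_{i+1} σ`. The statement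
about words follows because the remaining principal edges of `s_m τ` are exactly those of `τ`.
-/

namespace Fin

lemma val_succAbove {n : ℕ} (p : Fin (n + 1)) (i : Fin n) :
    (p.succAbove i : ℕ) = if (i : ℕ) < p then (i : ℕ) else (i : ℕ) + 1 := by
  split_ifs with h
  · rw [succAbove_of_castSucc_lt _ _ h, val_castSucc]
  · rw [succAbove_of_le_castSucc _ _ (not_lt.1 h), val_succ]

lemma val_predAbove {n : ℕ} (p : Fin n) (i : Fin (n + 1)) :
    (p.predAbove i : ℕ) = if (p : ℕ) < i then (i : ℕ) - 1 else (i : ℕ) := by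
  split_ifs with h
  · rw [predAbove_of_castSucc_lt _ _ h, val_pred]
  · rw [predAbove_of_le_castSucc _ _ (not_lt.1 h), coe_castPred]

end Fin

namespace SimplexCategory

lemma hom_ext_apply {a b : SimplexCategory} {f g : a ⟶ b}
    (h : ∀ j, f.toOrderHom j = g.toOrderHom j) : f = g :=
  Hom.ext _ _ (OrderHom.ext _ _ (funext h))

lemma principalEdge_toOrderHom_val (n : ℕ) (i : Fin n) (k : Fin 2) :
    ((principalEdge n i).toOrderHom k : ℕ) = i + k := rfl

lemma vertexMap_toOrderHom_apply (n : ℕ) (i : Fin (n + 1)) (k : Fin 1) :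
    (vertexMap n i).toOrderHom k = i := rfl

lemma σ_toOrderHom_apply {n : ℕ} (i : Fin (n + 1)) (j : Fin (n + 2)) :
    (σ i).toOrderHom j = i.predAbove j := rfl

lemma δ_toOrderHom_apply {n : ℕ} (i : Fin (n + 2)) (j : Fin (n + 1)) :
    (δ i).toOrderHom j = i.succAbove j := rfl

lemma isGeneric_σ_zero : IsGeneric (σ (0 : Fin 1)) :=
  ⟨Subsingleton.elim (α := Fin 1) _ _, Subsingleton.elim (α := Fin 1) _ _⟩

lemma isFree_principalEdge (n : ℕ) (i : Fin n) : IsFree (principalEdge n i) :=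
  fun _ => rfl

lemma principalEdge_comp_σ_succAbove {n : ℕ} (m : Fin (n + 1)) (j : Fin n) :
    principalEdge (n + 1) (m.succAbove j) ≫ σ m = principalEdge n j := by
  refine hom_ext_apply fun k => Fin.ext ?_
  have hk : (k : ℕ) < 2 := k.isLt
  simp only [comp_toOrderHom, OrderHom.comp_coe, Function.comp_apply, σ_toOrderHom_apply,
    Fin.val_predAbove, principalEdge_toOrderHom_val, Fin.val_succAbove]
  split_ifs <;> omega

lemma σ_zero_comp_vertexMap {n : ℕ} (i : Fin (n + 1)) :
    σ (0 : Fin 1) ≫ vertexMap n i = principalEdge (n + 1) i ≫ σ i := by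
  refine hom_ext_apply fun k => Fin.ext ?_
  have hk : (k : ℕ) < 2 := k.isLt
  simp only [comp_toOrderHom, OrderHom.comp_coe, Function.comp_apply, σ_toOrderHom_apply,
    vertexMap_toOrderHom_apply, Fin.val_predAbove]
  split_ifs <;> simp only [principalEdge_toOrderHom_val] at * <;> omega

lemma isPushout_σ_zero_principalEdge {n : ℕ} (i : Fin (n + 1)) :
    IsPushout (σ (0 : Fin 1)) (principalEdge (n + 1) i) (vertexMap n i) (σ i) := by
  refine .of_isColimit (PushoutCocone.IsColimit.mk (σ_zero_comp_vertexMap i)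
    (fun s => δ i.succ ≫ s.inr) (fun s => ?_) (fun s => ?_) (fun s m _ hm => ?_))
  · have hvertex : vertexMap n i ≫ δ i.succ = δ 1 ≫ principalEdge (n + 1) i :=
      hom_ext_apply fun k => Fin.ext (by
        rw [Subsingleton.elim (α := Fin 1) k 0]
        simp only [comp_toOrderHom, OrderHom.comp_coe, Function.comp_apply,
          vertexMap_toOrderHom_apply, δ_toOrderHom_apply, Fin.succAbove_succ_self,
          principalEdge_toOrderHom_val, Fin.val_succAbove]
        rfl)
    rw [← Category.assoc, hvertex, Category.assoc, ← s.condition, ← Category.assoc,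
      Subsingleton.elim (δ 1 ≫ σ 0) (𝟙 _), Category.id_comp]
  · have hedge : s.inr.toOrderHom i.castSucc = s.inr.toOrderHom i.succ :=
      calc s.inr.toOrderHom i.castSucc = (principalEdge (n + 1) i ≫ s.inr).toOrderHom 0 := rfl
        _ = (σ 0 ≫ s.inl).toOrderHom 0 := by rw [s.condition]
        _ = (σ 0 ≫ s.inl).toOrderHom 1 := rfl
        _ = (principalEdge (n + 1) i ≫ s.inr).toOrderHom 1 := by rw [s.condition]
        _ = s.inr.toOrderHom i.succ := rfl
    refine hom_ext_apply fun j => ?_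
    show s.inr.toOrderHom (i.succ.succAbove (i.predAbove j)) = _
    by_cases hj : j = i.succ
    · rw [hj, Fin.predAbove_succ_self, Fin.succAbove_succ_self, hedge]
    · rw [Fin.succ_succAbove_predAbove hj]
  · rw [← hm, ← Category.assoc, δ_comp_σ_succ, Category.id_comp]

end SimplexCategory

section Splice

variable {m n : ℕ} (v : Fin m → Letter) (l : Letter) (v' : Fin n → Letter) {p : Fin (m + n + 1)}

lemma splice_of_val_eq (hp : (p : ℕ) = m) : splice v l v' p = l := by
  simp [splice, hp]

lemma splice_succAbove (hp : (p : ℕ) = m) (j : Fin (m + n)) :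
    splice v l v' (p.succAbove j) = concatW v v' j := by
  have hj := j.isLt
  simp only [splice, concatW, Fin.val_succAbove, hp]
  split_ifs <;> first | rfl | omega | (congr 1; ext; simp only; omega)

end Splice

namespace SSet

variable (X : SSet)

lemma map_principalEdge_σ_succAbove {n : ℕ} (m : Fin (n + 1)) (j : Fin n) (τ : X _⦋n⦌) :
    X.map (principalEdge (n + 1) (m.succAbove j)).op (X.σ m τ)
      = X.map (principalEdge n j).op τ := by
  rw [← SimplexCategory.principalEdge_comp_σ_succAbove m j, op_comp,
    Functor.map_comp_apply]
  rfl

lemma map_principalEdge_σ_self {n : ℕ} (i : Fin (n + 1)) (τ : X _⦋n⦌) :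
    X.map (principalEdge (n + 1) i).op (X.σ i τ) = X.σ 0 (X.map (vertexMap n i).op τ) := by
  show X.map (principalEdge (n + 1) i).op (X.map (SimplexCategory.σ i).op τ) = _
  rw [← Functor.map_comp_apply, ← op_comp, ← SimplexCategory.σ_zero_comp_vertexMap,
    op_comp, Functor.map_comp_apply]
  rfl

lemma mem_wordSet_splice_iff {m n : ℕ} (v : Fin m → Letter) (l : Letter)
    (v' : Fin n → Letter) {p : Fin (m + n + 1)} (hp : (p : ℕ) = m) (σ : X _⦋m + n + 1⦌) :
    σ ∈ wordSet X (splice v l v') ↔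
      X.map (principalEdge _ p).op σ ∈ edgeSet X l ∧
        ∀ j, X.map (principalEdge _ (p.succAbove j)).op σ ∈ edgeSet X (concatW v v' j) := by
  simp only [wordSet, Set.mem_ofPred_eq]
  rw [Fin.forall_iff_succAbove p, splice_of_val_eq v l v' hp]
  simp only [splice_succAbove v l v' hp]

end SSet

lemma IsDecomposition.isPullback_σ {X : SSet} (hX : IsDecomposition X) {n : ℕ}
    (i : Fin (n + 1)) :
    IsPullback (X.map (vertexMap n i).op) (X.σ i) (X.σ 0) (X.map (principalEdge (n + 1) i).op) :=
  hX _ _ _ _ SimplexCategory.isGeneric_σ_zero (SimplexCategory.isFree_principalEdge _ i)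
    (SimplexCategory.isPushout_σ_zero_principalEdge i)

lemma IsDecomposition.map_principalEdge_mem_range_σ_iff {X : SSet} (hX : IsDecomposition X)
    {n : ℕ} (σ : X _⦋n + 1⦌) (i : Fin (n + 1)) :
    X.map (principalEdge (n + 1) i).op σ ∈ Set.range (X.σ (0 : Fin 1))
      ↔ σ = X.σ i (X.δ i.succ σ) := by
  constructor
  · rintro ⟨x, hx⟩
    obtain ⟨τ, -, rfl⟩ := Types.exists_of_isPullback (hX.isPullback_σ i) x σ hx
    rw [X.δ_comp_σ_succ_apply]
  · intro h
    rw [h, X.map_principalEdge_σ_self]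
    exact ⟨_, rfl⟩

theorem statement2 (X : SSet) (hX : IsDecomposition X) :
    (∀ (m n : ℕ) (v : Fin m → Letter) (v' : Fin n → Letter),
      wordSet X (splice v Letter.z v')
        = X.σ (⟨m, by omega⟩ : Fin (m + n + 1)) '' wordSet X (concatW v v')) ∧
    (∀ (n : ℕ) (σ : X _⦋n + 1⦌) (i : Fin (n + 1)),
      X.map (principalEdge (n + 1) i).op σ ∈ Set.range (X.σ (0 : Fin 1))
        ↔ σ = X.σ i (X.δ i.succ σ)) := by
  refine ⟨fun m n v v' => ?_, fun n σ i => hX.map_principalEdge_mem_range_σ_iff σ i⟩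
  ext σ
  rw [X.mem_wordSet_splice_iff v _ v' (p := ⟨m, by omega⟩) rfl]
  constructor
  · rintro ⟨hdeg, hedges⟩
    have hσ := (hX.map_principalEdge_mem_range_σ_iff σ _).1 hdeg
    refine ⟨X.δ _ σ, fun j => ?_, hσ.symm⟩
    have hedge := hedges j
    rwa [hσ, X.map_principalEdge_σ_succAbove] at hedge
  · rintro ⟨τ, hτ, rfl⟩
    refine ⟨⟨_, (X.map_principalEdge_σ_self _ τ).symm⟩, fun j => ?_⟩
    rw [X.map_principalEdge_σ_succAbove]
    exact hτ j
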